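/- arXiv:1706.05093 — 6 statements merged into one kernel-verified Lean document; each statement's English description precedes it below -/
import Mathlib

section
/- If g : ℝⁿ → ℝ is a polynomial of degree 3 such that the gradient ∇g vanishes at every point where g vanishes, then g = c·l³ for some linear polynomial l and nonzero constant c (equivalently, g is the cube of a degree-one polynomial up to a constant factor). -/
/-!
Restrict `g` to a line `t ↦ u + t • v`. This gives a polynomial in `t` of degree at most 3 whose
Taylor coefficients at `t = 0` are `g u`, `D g u`, `D² g u / 2` and `D³ g / 6`, where `D` is the
derivative in direction `v`; the last one does not depend on `u` and equals `g₃ v`, for `g₃` the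
cubic part of `g`. Fix `v` with `g₃ v ≠ 0`. By hypothesis every root of this real cubic is a
multiple root, and a real cubic has a root, so it is `c (t - r)³`. Comparing coefficients gives
`(D² g u)³ = 216 (g₃ v)² g u` for every `u`, so `g` is a constant times the cube of `D² g`.
-/

section

open Polynomial

theorem Real.exists_isRoot_of_odd_natDegree {p : ℝ[X]} (hp : Odd p.natDegree) :
    ∃ x, p.IsRoot x := by
  have hp0 : p ≠ 0 := by rintro rfl; simp at hp
  -- `p(x) p(-x)` has leading coefficient `-(lc p)²`, so `p` changes sign between some `x` and `-x`
  set q := p * p.comp (-X)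
  have hq_deg : 0 < q.degree := by
    rw [← natDegree_pos_iff_degree_pos,
      natDegree_mul hp0 (by simpa [comp_eq_zero_iff] using hp0)]
    exact Nat.add_pos_left hp.pos _
  have hq_lead : q.leadingCoeff < 0 := by
    rw [leadingCoeff_mul, leadingCoeff_comp (by simp), leadingCoeff_neg, leadingCoeff_X,
      hp.neg_one_pow]
    have := leadingCoeff_ne_zero.mpr hp0
    nlinarith [sq_pos_of_ne_zero this]
  obtain ⟨x, hx⟩ :=
    ((q.tendsto_atBot_of_leadingCoeff_nonpos hq_deg hq_lead.le).eventually_lt_atBot 0).exists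
  have h0 : (0 : ℝ) ∈ Set.uIcc (p.eval x) (p.eval (-x)) := by
    simp only [q, eval_mul, eval_comp, eval_neg, eval_X] at hx
    rw [Set.mem_uIcc]
    rcases le_total 0 (p.eval x) with h | h
    · exact .inr ⟨by nlinarith, h⟩
    · exact .inl ⟨h, by nlinarith⟩
  obtain ⟨r, -, hr⟩ := intermediate_value_uIcc p.continuous.continuousOn h0
  exact ⟨r, hr⟩

theorem Polynomial.eq_C_mul_X_sub_C_pow_three {K : Type*} [Field K] {q : K[X]}
    (h3 : q.natDegree = 3) {r : K} (hr : q.IsRoot r)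
    (hmult : ∀ t, q.IsRoot t → q.derivative.IsRoot t) :
    q = C q.leadingCoeff * (X - C r) ^ 3 := by
  have hq0 : q ≠ 0 := by rintro rfl; simp at h3
  obtain ⟨q₁, hq⟩ : (X - C r) ^ 2 ∣ q :=
    (le_rootMultiplicity_iff hq0).mp
      ((one_lt_rootMultiplicity_iff_isRoot hq0).mpr ⟨hr, hmult r hr⟩)
  have hq₁ : q₁.natDegree = 1 := by
    have hq₁0 : q₁ ≠ 0 := by rintro rfl; exact hq0 (by simpa using hq)
    have := congrArg natDegree hq
    rw [natDegree_mul (by simp [X_sub_C_ne_zero]) hq₁0, natDegree_pow, natDegree_X_sub_C] at this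
    omega
  obtain ⟨a, b, rfl⟩ := exists_eq_X_add_C_of_natDegree_le_one hq₁.le
  have ha : a ≠ 0 := by rintro rfl; simp at hq₁
  set s := -b / a
  have hb : b = -(a * s) := by rw [mul_div_cancel₀ _ ha, neg_neg]
  rw [hb] at hq
  suffices hsr : s = r by
    have hq' : q = C a * (X - C r) ^ 3 := by rw [hq, hsr, C_neg, C_mul]; ring
    rw [hq', leadingCoeff_mul, leadingCoeff_C, leadingCoeff_pow, leadingCoeff_X_sub_C, one_pow,
      mul_one]
  -- the root `s` of `q₁` is a multiple root of `q`, and `q'(s) = a (s - r) ^ 2`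
  have hs : q.IsRoot s := by simp [hq]
  have hq' := hmult s hs
  simp only [hq, IsRoot, derivative_mul, derivative_pow, derivative_add, derivative_sub,
    derivative_X, derivative_C, eval_add, eval_mul, eval_pow, eval_sub, eval_X, eval_C, eval_one,
    eval_zero] at hq'
  have : a * (s - r) ^ 2 = 0 := by linear_combination hq'
  simpa [ha, sub_eq_zero] using this

theorem Real.coeff_two_pow_three_of_forall_isRoot_derivative {q : ℝ[X]} (h3 : q.natDegree = 3)
    (hmult : ∀ t, q.IsRoot t → q.derivative.IsRoot t) :
    q.coeff 2 ^ 3 = 27 * q.coeff 3 ^ 2 * q.coeff 0 := by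
  obtain ⟨r, hr⟩ := Real.exists_isRoot_of_odd_natDegree (p := q) (by rw [h3]; decide)
  have hq := eq_C_mul_X_sub_C_pow_three h3 hr hmult
  rw [sub_eq_add_neg, ← C_neg] at hq
  rw [hq]
  simp only [coeff_C_mul, coeff_X_add_C_pow]
  norm_num
  ring

end

namespace MvPolynomial

variable {σ R : Type*} [CommRing R]

noncomputable def restrictToLine (u v : σ → R) : MvPolynomial σ R →ₐ[R] Polynomial R :=
  aeval fun i => Polynomial.C (u i) + Polynomial.C (v i) * Polynomial.X

theorem eval_restrictToLine (u v : σ → R) (p : MvPolynomial σ R) (t : R) :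
    (restrictToLine u v p).eval t = eval (u + t • v) p := by
  rw [restrictToLine, ← Polynomial.coe_aeval_eq_eval, ← AlgHom.comp_apply, comp_aeval,
    ← aeval_eq_eval]
  congr 2 with i
  simp
  ring

@[simp]
theorem restrictToLine_X (u v : σ → R) (i : σ) :
    restrictToLine u v (X i) = Polynomial.C (u i) + Polynomial.C (v i) * Polynomial.X :=
  aeval_X _ i

@[simp]
theorem restrictToLine_C (u v : σ → R) (a : R) : restrictToLine u v (C a) = Polynomial.C a :=
  aeval_C _ a

theorem homogeneousComponent_totalDegree_ne_zero {p : MvPolynomial σ R} (hp : p ≠ 0) :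
    homogeneousComponent p.totalDegree p ≠ 0 := by
  obtain ⟨m, hm, hmd⟩ :=
    p.support.exists_mem_eq_sup (support_nonempty.mpr hp) fun s => s.sum fun _ e => e
  have hmd' : m.degree = p.totalDegree := hmd.symm
  intro h
  have := coeff_homogeneousComponent (n := p.totalDegree) p m
  rw [h, coeff_zero, if_pos hmd'] at this
  exact mem_support_iff.mp hm this.symm

theorem totalDegree_pow_of_isDomain [IsDomain R] (p : MvPolynomial σ R) (n : ℕ) :
    (p ^ n).totalDegree = n * p.totalDegree := by
  rcases eq_or_ne p 0 with rfl | hp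
  · cases n <;> simp
  induction n with
  | zero => simp
  | succ n ih =>
    rw [pow_succ, totalDegree_mul_of_isDomain (pow_ne_zero n hp) hp, ih]
    ring

theorem totalDegree_pderiv_le (i : σ) (p : MvPolynomial σ R) :
    (pderiv i p).totalDegree ≤ p.totalDegree - 1 := by
  refine Finset.sup_le fun m hm => ?_
  have hm' : m + Finsupp.single i 1 ∈ p.support := by
    rw [mem_support_iff, coeff_pderiv] at hm
    exact mem_support_iff.mpr (left_ne_zero_of_mul hm)
  have := le_totalDegree hm'
  rw [Finsupp.sum_add_index' (fun _ => rfl) (fun _ _ _ => rfl), Finsupp.sum_single_index rfl]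
    at this
  omega

theorem restrictToLine_zero_monomial (v : σ → R) (m : σ →₀ ℕ) (r : R) :
    restrictToLine 0 v (monomial m r) =
      Polynomial.C (eval v (monomial m r)) * Polynomial.X ^ m.degree := by
  simp only [restrictToLine, aeval_monomial, eval_monomial, Pi.zero_apply, Polynomial.C_0,
    zero_add, Finsupp.prod, Finsupp.degree_apply, mul_pow, Finset.prod_mul_distrib,
    Finset.prod_pow_eq_pow_sum, Polynomial.algebraMap_eq, map_mul, map_prod, map_pow, mul_assoc]

theorem coeff_restrictToLine_zero (v : σ → R) (p : MvPolynomial σ R) (d : ℕ) :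
    (restrictToLine 0 v p).coeff d = eval v (homogeneousComponent d p) := by
  induction p using MvPolynomial.induction_on' with
  | add p q hp hq => simp [hp, hq]
  | monomial m r =>
    rw [restrictToLine_zero_monomial, Polynomial.coeff_C_mul_X_pow,
      homogeneousComponent_of_mem (isHomogeneous_monomial r rfl)]
    split_ifs <;> simp_all

variable [Fintype σ]

noncomputable def dirDeriv (v : σ → R) : Derivation R (MvPolynomial σ R) (MvPolynomial σ R) :=
  ∑ i, v i • pderiv i

theorem dirDeriv_apply (v : σ → R) (p : MvPolynomial σ R) :
    dirDeriv v p = ∑ i, v i • pderiv i p := by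
  rw [dirDeriv, ← Derivation.coeFnAddMonoidHom_apply, map_sum, Finset.sum_apply]
  rfl

theorem dirDeriv_X (v : σ → R) (i : σ) : dirDeriv v (X i) = C (v i) := by
  classical
  simp [dirDeriv_apply, pderiv_X, Pi.single_apply, C_eq_smul_one]

theorem derivative_restrictToLine (u v : σ → R) (p : MvPolynomial σ R) :
    Polynomial.derivative (restrictToLine u v p) = restrictToLine u v (dirDeriv v p) := by
  induction p using MvPolynomial.induction_on with
  | C a => simp [restrictToLine]
  | add p q hp hq => simp [hp, hq]
  | mul_X p i hp =>
    simp only [map_mul, Polynomial.derivative_mul, hp, Derivation.leibniz, smul_eq_mul, map_add,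
      dirDeriv_X, restrictToLine_X, restrictToLine_C, Polynomial.derivative_C,
      Polynomial.derivative_X]
    ring

theorem iterate_derivative_restrictToLine (u v : σ → R) (p : MvPolynomial σ R) (k : ℕ) :
    Polynomial.derivative^[k] (restrictToLine u v p) =
      restrictToLine u v ((dirDeriv v)^[k] p) := by
  induction k with
  | zero => rfl
  | succ k ih =>
    rw [Function.iterate_succ_apply', ih, derivative_restrictToLine, Function.iterate_succ_apply']

theorem factorial_mul_coeff_restrictToLine (u v : σ → R) (p : MvPolynomial σ R) (k : ℕ) :
    (k.factorial : R) * (restrictToLine u v p).coeff k = eval u ((dirDeriv v)^[k] p) := by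
  have := Polynomial.coeff_iterate_derivative (k := k) (restrictToLine u v p) 0
  rw [zero_add, Nat.descFactorial_self, nsmul_eq_mul, iterate_derivative_restrictToLine,
    Polynomial.coeff_zero_eq_eval_zero, eval_restrictToLine, zero_smul, add_zero] at this
  exact this.symm

theorem totalDegree_dirDeriv_le (v : σ → R) (p : MvPolynomial σ R) :
    (dirDeriv v p).totalDegree ≤ p.totalDegree - 1 := by
  rw [dirDeriv_apply]
  refine (totalDegree_finsetSum _ _).trans (Finset.sup_le fun i _ => ?_)
  exact (totalDegree_smul_le _ _).trans (totalDegree_pderiv_le i p)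

theorem totalDegree_iterate_dirDeriv_le (v : σ → R) (p : MvPolynomial σ R) (k : ℕ) :
    ((dirDeriv v)^[k] p).totalDegree ≤ p.totalDegree - k := by
  induction k with
  | zero => simp
  | succ k ih =>
    rw [Function.iterate_succ_apply']
    exact (totalDegree_dirDeriv_le v _).trans (by omega)

theorem iterate_dirDeriv_totalDegree_eq_C (v : σ → R) (p : MvPolynomial σ R) :
    ∃ c, (dirDeriv v)^[p.totalDegree] p = C c :=
  ⟨_, totalDegree_eq_zero_iff_eq_C.mp
    (Nat.le_zero.mp ((totalDegree_iterate_dirDeriv_le v p _).trans (Nat.sub_self _).le))⟩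

theorem iterate_dirDeriv_eq_zero (v : σ → R) {p : MvPolynomial σ R} {k : ℕ}
    (hk : p.totalDegree < k) : (dirDeriv v)^[k] p = 0 := by
  obtain ⟨j, rfl⟩ := Nat.exists_eq_add_of_lt hk
  obtain ⟨c, hc⟩ := iterate_dirDeriv_totalDegree_eq_C v p
  rw [show p.totalDegree + j + 1 = j + 1 + p.totalDegree by omega, Function.iterate_add_apply, hc,
    Function.iterate_succ_apply, derivation_C, Function.iterate_fixed (map_zero _)]

theorem isRoot_derivative_restrictToLine {g : MvPolynomial σ R}
    (hgrad : ∀ x : σ → R, eval x g = 0 → ∀ i, eval x (pderiv i g) = 0)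
    {u v : σ → R} {t : R}
    (ht : (restrictToLine u v g).IsRoot t) : (restrictToLine u v g).derivative.IsRoot t := by
  rw [Polynomial.IsRoot, eval_restrictToLine] at ht
  rw [Polynomial.IsRoot, derivative_restrictToLine, eval_restrictToLine, dirDeriv_apply, map_sum]
  exact Finset.sum_eq_zero fun i _ => by rw [smul_eval, hgrad _ ht i, mul_zero]

section Domain

variable [IsDomain R] [CharZero R]

theorem natDegree_restrictToLine_le (u v : σ → R) (p : MvPolynomial σ R) :
    (restrictToLine u v p).natDegree ≤ p.totalDegree := by
  refine Polynomial.natDegree_le_iff_coeff_eq_zero.mpr fun k hk => ?_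
  have := factorial_mul_coeff_restrictToLine u v p k
  rw [iterate_dirDeriv_eq_zero v hk, map_zero] at this
  exact (mul_eq_zero.mp this).resolve_left (Nat.cast_ne_zero.mpr k.factorial_ne_zero)

theorem coeff_restrictToLine_totalDegree (u v : σ → R) (p : MvPolynomial σ R) :
    (restrictToLine u v p).coeff p.totalDegree =
      eval v (homogeneousComponent p.totalDegree p) := by
  obtain ⟨c, hc⟩ := iterate_dirDeriv_totalDegree_eq_C v p
  have h := factorial_mul_coeff_restrictToLine u v p p.totalDegree
  have h0 := factorial_mul_coeff_restrictToLine 0 v p p.totalDegree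
  rw [hc, eval_C] at h h0
  rw [← coeff_restrictToLine_zero]
  exact mul_left_cancel₀ (Nat.cast_ne_zero.mpr (Nat.factorial_ne_zero _)) (h.trans h0.symm)

end Domain

theorem pow_three_iterate_dirDeriv_two {g : MvPolynomial σ ℝ} (hdeg : g.totalDegree = 3)
    (hgrad : ∀ x : σ → ℝ, eval x g = 0 → ∀ i, eval x (pderiv i g) = 0) {v : σ → ℝ}
    (hv : eval v (homogeneousComponent 3 g) ≠ 0) :
    ((dirDeriv v)^[2] g) ^ 3 = C (216 * eval v (homogeneousComponent 3 g) ^ 2) * g := by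
  refine MvPolynomial.funext fun u => ?_
  have hc3 : (restrictToLine u v g).coeff 3 = eval v (homogeneousComponent 3 g) := by
    simpa only [hdeg] using coeff_restrictToLine_totalDegree u v g
  have h3 : (restrictToLine u v g).natDegree = 3 :=
    le_antisymm (hdeg ▸ natDegree_restrictToLine_le u v g)
      (Polynomial.le_natDegree_of_ne_zero (hc3 ▸ hv))
  have hcubic := Real.coeff_two_pow_three_of_forall_isRoot_derivative h3
    fun t ht => isRoot_derivative_restrictToLine hgrad ht
  have h2 := factorial_mul_coeff_restrictToLine u v g 2
  have h0 := factorial_mul_coeff_restrictToLine u v g 0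
  simp only [Nat.factorial, Nat.cast_one, one_mul, Function.iterate_zero, id] at h2 h0
  -- `216 = 2³ * 27`, since `D² g u` is twice the coefficient of `t²`
  rw [eval_pow, eval_mul, eval_C, ← h2, ← h0, ← hc3]
  linear_combination 8 * hcubic

end MvPolynomial

open MvPolynomial

theorem stmt_0 (n : ℕ) (g : MvPolynomial (Fin n) ℝ)
    (hdeg : g.totalDegree = 3)
    (hgrad : ∀ x : Fin n → ℝ, eval x g = 0 → ∀ i, eval x (pderiv i g) = 0) :
    ∃ (c : ℝ) (l : MvPolynomial (Fin n) ℝ),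
      c ≠ 0 ∧ l.totalDegree = 1 ∧ g = C c * l ^ 3 := by
  have hg : g ≠ 0 := by rintro rfl; simp at hdeg
  obtain ⟨v, hv⟩ : ∃ v, eval v (homogeneousComponent 3 g) ≠ 0 := by
    by_contra! h
    exact hdeg ▸ homogeneousComponent_totalDegree_ne_zero hg <|
      MvPolynomial.funext fun x => by simp [h x]
  set a := 216 * eval v (homogeneousComponent 3 g) ^ 2
  have ha : a ≠ 0 := by positivity
  set l := (dirDeriv v)^[2] g
  have hl : l ^ 3 = C a * g := pow_three_iterate_dirDeriv_two hdeg hgrad hv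
  refine ⟨a⁻¹, l, inv_ne_zero ha, ?_, ?_⟩
  · have := congrArg totalDegree hl
    rw [totalDegree_pow_of_isDomain, totalDegree_mul_of_isDomain (C_ne_zero.mpr ha) hg,
      totalDegree_C, hdeg] at this
    omega
  · rw [hl, ← mul_assoc, ← C_mul, inv_mul_cancel₀ ha, C_1, one_mul]
end

section
/- Every irreducible cubic polynomial f : ℝⁿ → ℝ (n ≥ 2) whose real zero set is nonempty has a regular point on its zero set: there exists x₀ with f(x₀) = 0 and ∇f(x₀) ≠ 0. -/
/-! Suppose every real zero of the cubic `f` is singular. Its top-degree form is nonzero at some `v`,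
so `t ↦ f (t • v)` is a cubic in `t` and `f` takes both signs; fix `p` with `f p < 0`. For `x` with
`f x > 0`, the restriction `g t = f (p + t • (x - p))` changes sign on `[0, 1]` and all its roots
are multiple, which forces `g = e (X - r) ^ 3`; eliminating `e` and `r` gives
`27 f(p)² f(x) = (3 f(p) + ∇f(p) · (x - p))³`. This polynomial identity holds on the nonempty open
set `{f > 0}`, hence everywhere, so `f` is a nonzero constant times the cube of an affine
polynomial, which is not irreducible. -/

namespace MvPolynomial

variable {σ R : Type*} [CommSemiring R]

noncomputable def restrictLine (x v : σ → R) : MvPolynomial σ R →ₐ[R] Polynomial R :=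
  aeval fun i => Polynomial.C (v i) * Polynomial.X + Polynomial.C (x i)

theorem restrictLine_X (x v : σ → R) (i : σ) :
    restrictLine x v (X i) = Polynomial.C (v i) * Polynomial.X + Polynomial.C (x i) :=
  aeval_X _ i

theorem eval_restrictLine (x v : σ → R) (f : MvPolynomial σ R) (t : R) :
    (restrictLine x v f).eval t = eval (x + t • v) f := by
  rw [restrictLine, ← Polynomial.coe_aeval_eq_eval, comp_aeval_apply, ← aeval_eq_eval]
  congr 2
  funext i
  simp only [map_add, map_mul, Polynomial.aeval_C, Polynomial.aeval_X, Pi.add_apply, Pi.smul_apply,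
    smul_eq_mul, Algebra.algebraMap_self, RingHom.id_apply]
  ring

theorem natDegree_restrictLine_le (x v : σ → R) (f : MvPolynomial σ R) :
    (restrictLine x v f).natDegree ≤ f.totalDegree := by
  simpa using! aeval_natDegree_le f le_rfl _ fun i => Polynomial.natDegree_linear_le

theorem derivative_restrictLine [Fintype σ] (x v : σ → R) (f : MvPolynomial σ R) :
    (restrictLine x v f).derivative = ∑ i, Polynomial.C (v i) * restrictLine x v (pderiv i f) := by
  induction f using MvPolynomial.induction_on with
  | C a => simp [restrictLine]
  | add p q hp hq => simp only [map_add, mul_add, Finset.sum_add_distrib, hp, hq]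
  | mul_X p j hp =>
    have hX : ∑ i, Polynomial.C (v i) * (restrictLine x v p * restrictLine x v (pderiv i (X j))) =
        Polynomial.C (v j) * restrictLine x v p := by
      rw [Finset.sum_eq_single j (fun i _ hij => by simp [pderiv_X_of_ne hij.symm]) (by simp)]
      simp [mul_comm]
    rw [map_mul, Polynomial.derivative_mul, hp, Finset.sum_mul]
    simp only [pderiv_mul, map_add, map_mul, mul_add, Finset.sum_add_distrib, hX, mul_assoc,
      restrictLine_X, Polynomial.derivative_mul, Polynomial.derivative_C, Polynomial.derivative_X,
      zero_mul, zero_add, add_zero, mul_one]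
    ring

theorem IsHomogeneous.eval_smul {φ : MvPolynomial σ R} {k : ℕ} (hφ : φ.IsHomogeneous k)
    (t : R) (v : σ → R) : eval (t • v) φ = t ^ k * eval v φ := by
  conv_lhs => rw [φ.as_sum]
  conv_rhs => rw [φ.as_sum]
  simp only [map_sum, Finset.mul_sum, eval_monomial]
  refine Finset.sum_congr rfl fun d hd => ?_
  have hdk : ∑ i ∈ d.support, d i = k := by
    simp [← hφ (mem_support_iff.mp hd), Finsupp.weight_apply, Finsupp.sum]
  simp only [Finsupp.prod, Pi.smul_apply, smul_eq_mul, mul_pow, Finset.prod_mul_distrib,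
    Finset.prod_pow_eq_pow_sum, hdk]
  ring

theorem eval_smul_eq_sum_homogeneousComponent (f : MvPolynomial σ R) (t : R) (v : σ → R) :
    eval (t • v) f =
      ∑ k ∈ Finset.range (f.totalDegree + 1), t ^ k * eval v (homogeneousComponent k f) := by
  conv_lhs => rw [← f.sum_homogeneousComponent]
  simp only [map_sum, (homogeneousComponent_isHomogeneous _ f).eval_smul]

theorem homogeneousComponent_totalDegree_ne_zero_s3 {f : MvPolynomial σ R} (hf : f ≠ 0) :
    homogeneousComponent f.totalDegree f ≠ 0 := by
  obtain ⟨d, hd, hdeg⟩ :=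
    Finset.exists_mem_eq_sup f.support (support_nonempty.mpr hf) fun s => s.sum fun _ e => e
  have hcoeff : coeff d (homogeneousComponent f.totalDegree f) = coeff d f := by
    rw [coeff_homogeneousComponent, if_pos (by rw [totalDegree, hdeg]; rfl)]
  exact fun h => mem_support_iff.mp hd (by rw [← hcoeff, h, coeff_zero])

end MvPolynomial

theorem exists_cubic_pos (a b c d : ℝ) (ha : 0 < a) :
    ∃ t : ℝ, 0 < a * t ^ 3 + b * t ^ 2 + c * t + d := by
  -- `T ≥ 1` with `a T ≥ |b| + |c| + |d| + a` makes `a T³` dominate the lower-order terms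
  obtain ⟨T, hT1, haT⟩ : ∃ T : ℝ, 1 ≤ T ∧ |b| + |c| + |d| + a ≤ a * T := by
    refine ⟨(|b| + |c| + |d|) / a + 1, ?_, ?_⟩
    · have h0 : 0 ≤ (|b| + |c| + |d|) / a := by positivity
      linarith
    · rw [mul_add, mul_one, mul_div_cancel₀ _ (ne_of_gt ha)]
  refine ⟨T, ?_⟩
  nlinarith [le_abs_self b, neg_abs_le b, le_abs_self c, neg_abs_le c, le_abs_self d, neg_abs_le d,
    abs_nonneg b, abs_nonneg c, abs_nonneg d, sq_nonneg T, mul_pos ha (lt_of_lt_of_le one_pos hT1)]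

theorem exists_cubic_neg_and_pos {a : ℝ} (b c d : ℝ) (ha : a ≠ 0) :
    ∃ s t : ℝ, a * s ^ 3 + b * s ^ 2 + c * s + d < 0 ∧ 0 < a * t ^ 3 + b * t ^ 2 + c * t + d := by
  rcases ha.lt_or_gt with ha | ha
  · obtain ⟨s, hs⟩ := exists_cubic_pos (-a) (-b) (-c) (-d) (neg_pos.mpr ha)
    obtain ⟨t, ht⟩ := exists_cubic_pos (-a) b (-c) d (neg_pos.mpr ha)
    exact ⟨s, -t, by linarith, by linarith⟩
  · obtain ⟨s, hs⟩ := exists_cubic_pos a (-b) c (-d) ha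
    obtain ⟨t, ht⟩ := exists_cubic_pos a b c d ha
    exact ⟨-s, t, by linarith, ht⟩

namespace Polynomial

/- The root `r ∈ (0, 1)` is double, so `g = (X - r)² h` with `deg h ≤ 1`. A constant `h` would give
`g 0` and `g 1` the same sign; otherwise the root of `h` is a root of `g`, hence double, hence `r`. -/
theorem exists_eq_C_mul_X_sub_C_pow_three {g : ℝ[X]} (hdeg : g.natDegree ≤ 3)
    (h0 : g.eval 0 < 0) (h1 : 0 < g.eval 1) (hsing : ∀ t, g.IsRoot t → g.derivative.IsRoot t) :
    ∃ e r : ℝ, g = C e * (X - C r) ^ 3 := by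
  have hg : g ≠ 0 := by rintro rfl; simp at h0
  obtain ⟨r, -, hr⟩ : ∃ r ∈ Set.Ioo (0 : ℝ) 1, g.IsRoot r :=
    intermediate_value_Ioo zero_le_one g.continuous.continuousOn ⟨h0, h1⟩
  obtain ⟨h, rfl⟩ : (X - C r) ^ 2 ∣ g := (le_rootMultiplicity_iff hg).mp <|
    (one_lt_rootMultiplicity_iff_isRoot hg).mpr ⟨hr, hsing r hr⟩
  have hh : h ≠ 0 := right_ne_zero_of_mul hg
  have hhdeg : h.natDegree ≤ 1 := by
    rw [natDegree_mul (pow_ne_zero _ (X_sub_C_ne_zero r)) hh, natDegree_pow, natDegree_X_sub_C] at hdeg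
    omega
  obtain ⟨a, b, rfl⟩ := exists_eq_X_add_C_of_natDegree_le_one hhdeg
  rcases eq_or_ne a 0 with rfl | ha
  · simp only [eval_mul, eval_pow, eval_sub, eval_X, eval_C, map_zero, zero_mul, zero_add] at h0 h1
    have hb : b < 0 := by nlinarith [sq_nonneg (0 - r)]
    nlinarith [sq_nonneg (1 - r)]
  · obtain ⟨u, rfl⟩ : ∃ u, b = -(a * u) := ⟨-b / a, by field_simp⟩
    have hur : u = r := by
      simpa [derivative_mul, derivative_pow, ha, sub_eq_zero] using hsing u (by simp)
    exact ⟨a, r, by rw [← hur]; simp only [map_neg, map_mul]; ring⟩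

/- For `g = e (X - r)³` both sides equal `27 e³ r⁶ (1 - r)³`. -/
theorem cube_identity_of_isRoot_derivative {g : ℝ[X]} (hdeg : g.natDegree ≤ 3)
    (h0 : g.eval 0 < 0) (h1 : 0 < g.eval 1) (hsing : ∀ t, g.IsRoot t → g.derivative.IsRoot t) :
    27 * g.eval 0 ^ 2 * g.eval 1 = (3 * g.eval 0 + g.derivative.eval 0) ^ 3 := by
  obtain ⟨e, r, rfl⟩ := exists_eq_C_mul_X_sub_C_pow_three hdeg h0 h1 hsing
  simp only [eval_mul, eval_C, eval_pow, eval_sub, eval_X, derivative_mul, derivative_C,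
    derivative_pow, derivative_sub, derivative_X, Nat.cast_ofNat, Nat.add_one_sub_one, zero_mul,
    sub_zero, mul_one, zero_add]
  ring

end Polynomial

namespace MvPolynomial

theorem exists_eval_neg_and_pos_of_totalDegree_eq_three {σ : Type*} {f : MvPolynomial σ ℝ}
    (hdeg : f.totalDegree = 3) : ∃ p q : σ → ℝ, eval p f < 0 ∧ 0 < eval q f := by
  have hf : f ≠ 0 := by rintro rfl; simp at hdeg
  obtain ⟨v, hv⟩ : ∃ v, eval v (homogeneousComponent 3 f) ≠ 0 := by
    by_contra! h
    exact hdeg ▸ homogeneousComponent_totalDegree_ne_zero_s3 hf <| funext fun x => by simp [h]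
  obtain ⟨s, t, hs, ht⟩ := exists_cubic_neg_and_pos (eval v (homogeneousComponent 2 f))
    (eval v (homogeneousComponent 1 f)) (eval v (homogeneousComponent 0 f)) hv
  refine ⟨s • v, t • v, ?_, ?_⟩ <;>
  · simp only [eval_smul_eq_sum_homogeneousComponent, hdeg, Finset.sum_range_succ,
      Finset.sum_range_zero]
    linarith

variable {σ : Type*} [Fintype σ]

theorem eq_of_eqOn_of_isOpen {𝕜 : Type*} [RCLike 𝕜] {p q : MvPolynomial σ 𝕜} {U : Set (σ → 𝕜)}
    (hU : IsOpen U) (hUne : U.Nonempty) (h : ∀ x ∈ U, eval x p = eval x q) : p = q := by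
  obtain ⟨z, hz⟩ := hUne
  exact funext fun x => (AnalyticOnNhd.eval_mvPolynomial p).eqOn_of_preconnected_of_eventuallyEq
    (AnalyticOnNhd.eval_mvPolynomial q) isPreconnected_univ (Set.mem_univ z)
    (Filter.eventuallyEq_of_mem (hU.mem_nhds hz) h) (Set.mem_univ x)

theorem cube_identity_of_forall_pderiv_eq_zero {f : MvPolynomial σ ℝ} (hdeg : f.totalDegree ≤ 3)
    (hsing : ∀ x, eval x f = 0 → ∀ i, eval x (pderiv i f) = 0) {p x : σ → ℝ}
    (hp : eval p f < 0) (hx : 0 < eval x f) :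
    27 * eval p f ^ 2 * eval x f = (3 * eval p f + ∑ i, eval p (pderiv i f) * (x i - p i)) ^ 3 := by
  set g := restrictLine p (x - p) f
  have hg : ∀ t, g.eval t = eval (p + t • (x - p)) f := eval_restrictLine p (x - p) f
  have hg' : ∀ t, g.derivative.eval t =
      ∑ i, (x i - p i) * eval (p + t • (x - p)) (pderiv i f) := by
    intro t
    simp [g, derivative_restrictLine, Polynomial.eval_finsetSum, eval_restrictLine]
  have hg_sing : ∀ t, g.IsRoot t → g.derivative.IsRoot t := fun t ht => by
    rw [Polynomial.IsRoot, hg']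
    exact Finset.sum_eq_zero fun i _ => by rw [hsing _ ((hg t).symm.trans ht) i, mul_zero]
  have := Polynomial.cube_identity_of_isRoot_derivative (g := g)
    ((natDegree_restrictLine_le _ _ f).trans hdeg) (by simpa [hg] using hp)
    (by simpa [hg] using hx) hg_sing
  simpa [hg, hg', mul_comm] using this

end MvPolynomial

open MvPolynomial

theorem stmt_3_general (n : ℕ) (f : MvPolynomial (Fin n) ℝ)
    (hirr : Irreducible f) (hdeg : f.totalDegree = 3) :
    ∃ x₀ : Fin n → ℝ, eval x₀ f = 0 ∧ ∃ i, eval x₀ (pderiv i f) ≠ 0 := by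
  by_contra! hsing
  obtain ⟨p, q, hp, hq⟩ := exists_eval_neg_and_pos_of_totalDegree_eq_three hdeg
  set L : MvPolynomial (Fin n) ℝ :=
    C (3 * eval p f) + ∑ i, C (eval p (pderiv i f)) * (X i - C (p i))
  have hcube : C (27 * eval p f ^ 2) * f = L ^ 3 :=
    eq_of_eqOn_of_isOpen (isOpen_lt continuous_const (continuous_eval f)) ⟨q, hq⟩ fun x hx => by
      simpa [L, eval_sum] using cube_identity_of_forall_pderiv_eq_zero hdeg.le hsing hp hx
  have hunit : IsUnit (C (27 * eval p f ^ 2) : MvPolynomial (Fin n) ℝ) :=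
    (isUnit_iff_ne_zero.mpr (by have := hp.ne; positivity)).map C
  exact not_irreducible_pow (by norm_num : 3 ≠ 1) (hcube ▸ (irreducible_isUnit_mul hunit).mpr hirr)

theorem stmt_3 (n : ℕ) (hn : 2 ≤ n) (f : MvPolynomial (Fin n) ℝ)
    (hirr : Irreducible f) (hdeg : f.totalDegree = 3)
    (hzero : ∃ x : Fin n → ℝ, eval x f = 0) :
    ∃ x₀ : Fin n → ℝ, eval x₀ f = 0 ∧ ∃ i, eval x₀ (pderiv i f) ≠ 0 :=
  stmt_3_general n f hirr hdeg
end

section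
/- Let f(x,y) = x³ + yᵗAy + k₀x² + (yᵗr)x + k₁x + yᵗs and H̃ ≠ 0. Then there exist homogeneous polynomials L₀,…,L₄ with deg Lᵢ = i such that H̃²|∇f|⁶ − 6⁴(tr A)²x⁸ − (L₀x¹² + L₁x¹⁰ + L₂x⁸ + L₃x⁶ + L₄x⁴) has total degree at most 7, and moreover L₀ = 3⁶H̃². -/
open MvPolynomial

/-- Squared norm of the gradient of a polynomial. -/
noncomputable def gradSq {n : ℕ} (f : MvPolynomial (Fin n) ℝ) : MvPolynomial (Fin n) ℝ :=
  ∑ i, (pderiv i f) ^ 2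

/-- Laplacian of a polynomial. -/
noncomputable def lap {n : ℕ} (f : MvPolynomial (Fin n) ℝ) : MvPolynomial (Fin n) ℝ :=
  ∑ i, pderiv i (pderiv i f)

/-- Δ₁ f = 2|∇f|²Δf − ∇fᵗ∇|∇f|². -/
noncomputable def delta1 {n : ℕ} (f : MvPolynomial (Fin n) ℝ) : MvPolynomial (Fin n) ℝ :=
  2 * gradSq f * lap f - ∑ i, pderiv i f * pderiv i (gradSq f)

/-- The cubic f(x,y) = x³ + yᵗAy + k₀x² + (yᵗr)x + k₁x + yᵗs, with x = X 0
and y = (X 1, …, X m) in `MvPolynomial (Fin (m+1)) ℝ`. -/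
noncomputable def fcmc (m : ℕ) (A : Matrix (Fin m) (Fin m) ℝ) (r s : Fin m → ℝ)
    (k₀ k₁ : ℝ) : MvPolynomial (Fin (m + 1)) ℝ :=
  X 0 ^ 3 + (∑ i, ∑ j, C (A i j) * X i.succ * X j.succ) + C k₀ * X 0 ^ 2
    + (∑ i, C (r i) * X i.succ) * X 0 + C k₁ * X 0 + ∑ i, C (s i) * X i.succ
/-!
Write `f = x³ + F₂ + F₁` with `Fᵢ` homogeneous of degree `i`. Then `∂ₓf = 3x² + a + b` and
`∂_{y_t} f = a_t + b_t` with `a`, `a_t` linear forms and `b`, `b_t` constants, so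
`|∇f|² = 9x⁴ + x²q + c + d + e` with `q, c, d, e` homogeneous of degrees `1, 2, 1, 0`.
In the cube of this sum every part of degree `≥ 8` is a form of degree `i` times `x^(12 - 2i)`,
and the rest has degree `≤ 7`; the term `6⁴ (tr A)² x⁸` is absorbed into `L₄`.
-/

namespace MvPolynomial

variable {σ R : Type*} [CommRing R]

theorem totalDegree_ofNat (n : ℕ) [n.AtLeastTwo] :
    (ofNat(n) : MvPolynomial σ R).totalDegree = 0 := by
  rw [← map_ofNat C n]
  exact totalDegree_C _

theorem exists_homogeneous_expansion_pow_three {x q c d e : MvPolynomial σ R}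
    (hx : x.IsHomogeneous 1) (hq : q.IsHomogeneous 1) (hc : c.IsHomogeneous 2)
    (hd : d.IsHomogeneous 1) (he : e.IsHomogeneous 0) :
    ∃ ℓ : Fin 5 → MvPolynomial σ R, (∀ i : Fin 5, (ℓ i).IsHomogeneous i) ∧ ℓ 0 = C (3 ^ 6) ∧
      ((9 * x ^ 4 + x ^ 2 * q + c + d + e) ^ 3
        - (ℓ 0 * x ^ 12 + ℓ 1 * x ^ 10 + ℓ 2 * x ^ 8 + ℓ 3 * x ^ 6 + ℓ 4 * x ^ 4)).totalDegree
        ≤ 7 := by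
  have h (n : ℕ) [n.AtLeastTwo] : (ofNat(n) : MvPolynomial σ R).IsHomogeneous 0 :=
    isHomogeneous_C _ _
  refine ⟨![C (3 ^ 6), 243 * q, 243 * c + 27 * q ^ 2, 243 * x ^ 2 * d + 54 * q * c + q ^ 3,
      243 * x ^ 4 * e + 54 * x ^ 2 * q * d + 27 * c ^ 2 + 3 * q ^ 2 * c], ?_, rfl, ?_⟩
  · intro i
    fin_cases i
    · exact isHomogeneous_C _ _
    · exact (h 243).mul hq
    · exact ((h 243).mul hc).add ((h 27).mul (hq.pow 2))
    · exact ((((h 243).mul (hx.pow 2)).mul hd).add (((h 54).mul hq).mul hc)).add (hq.pow 3)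
    · exact (((((h 243).mul (hx.pow 4)).mul he).add
        ((((h 54).mul (hx.pow 2)).mul hq).mul hd)).add ((h 27).mul (hc.pow 2))).add
        (((h 3).mul (hq.pow 2)).mul hc)
  · have hrem : (9 * x ^ 4 + x ^ 2 * q + c + d + e) ^ 3
          - (C (3 ^ 6) * x ^ 12 + 243 * q * x ^ 10 + (243 * c + 27 * q ^ 2) * x ^ 8
            + (243 * x ^ 2 * d + 54 * q * c + q ^ 3) * x ^ 6
            + (243 * x ^ 4 * e + 54 * x ^ 2 * q * d + 27 * c ^ 2 + 3 * q ^ 2 * c) * x ^ 4)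
        = 3 * x ^ 4 * q ^ 2 * (d + e) + 3 * x ^ 2 * q * (c + d + e) ^ 2 + (c + d + e) ^ 3
          + 27 * x ^ 4 * (2 * x ^ 2 * q * e + (d + e) * (2 * c + d + e)) := by
      simp only [map_pow, map_ofNat]
      ring
    simp only [Fin.isValue, Matrix.cons_val]
    rw [hrem]
    have := hx.totalDegree_le
    have := hq.totalDegree_le
    have := hc.totalDegree_le
    have := hd.totalDegree_le
    have := he.totalDegree_le
    repeat (first | grw [totalDegree_add] | grw [totalDegree_mul] | grw [totalDegree_pow])
    simp only [totalDegree_ofNat]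
    omega

end MvPolynomial

open Finset in
theorem exists_gradSq_X_zero_pow_three_add_eq {n : ℕ} {F₂ F₁ : MvPolynomial (Fin (n + 1)) ℝ}
    (h₂ : F₂.IsHomogeneous 2) (h₁ : F₁.IsHomogeneous 1) :
    ∃ q c d e : MvPolynomial (Fin (n + 1)) ℝ, q.IsHomogeneous 1 ∧ c.IsHomogeneous 2 ∧
      d.IsHomogeneous 1 ∧ e.IsHomogeneous 0 ∧
      gradSq (X 0 ^ 3 + F₂ + F₁) = 9 * X 0 ^ 4 + X 0 ^ 2 * q + c + d + e := by
  set a := fun i => pderiv i F₂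
  set b := fun i => pderiv i F₁
  have ha (i) : (a i).IsHomogeneous 1 := h₂.pderiv
  have hb (i) : (b i).IsHomogeneous 0 := h₁.pderiv
  have hX := isHomogeneous_X ℝ (0 : Fin (n + 1))
  refine ⟨6 * a 0, 6 * X 0 ^ 2 * b 0 + a 0 ^ 2 + ∑ t : Fin n, a t.succ ^ 2,
    2 * a 0 * b 0 + ∑ t : Fin n, 2 * a t.succ * b t.succ, b 0 ^ 2 + ∑ t : Fin n, b t.succ ^ 2,
    (isHomogeneous_C _ _).mul (ha 0), ?_, ?_, ?_, ?_⟩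
  · exact (((isHomogeneous_C _ _).mul (hX.pow 2)).mul (hb 0)).add ((ha 0).pow 2) |>.add
      (IsHomogeneous.sum _ _ _ fun t _ => (ha _).pow 2)
  · exact (((isHomogeneous_C _ _).mul (ha 0)).mul (hb 0)).add
      (IsHomogeneous.sum _ _ _ fun t _ => ((isHomogeneous_C _ _).mul (ha _)).mul (hb _))
  · exact ((hb 0).pow 2).add (IsHomogeneous.sum _ _ _ fun t _ => (hb _).pow 2)
  · have hzero : pderiv 0 (X 0 ^ 3 + F₂ + F₁) = 3 * X 0 ^ 2 + a 0 + b 0 := by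
      simp [a, b]
    have hsucc (t : Fin n) : pderiv t.succ (X 0 ^ 3 + F₂ + F₁) = a t.succ + b t.succ := by
      simp [a, b, pderiv_X_of_ne (Fin.succ_ne_zero t).symm]
    rw [gradSq, Fin.sum_univ_succ, hzero]
    simp only [hsucc, add_sq, sum_add_distrib]
    ring

theorem exists_fcmc_eq_X_zero_pow_three_add (m : ℕ) (A : Matrix (Fin m) (Fin m) ℝ)
    (r s : Fin m → ℝ) (k₀ k₁ : ℝ) :
    ∃ F₂ F₁ : MvPolynomial (Fin (m + 1)) ℝ, F₂.IsHomogeneous 2 ∧ F₁.IsHomogeneous 1 ∧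
      fcmc m A r s k₀ k₁ = X 0 ^ 3 + F₂ + F₁ := by
  have hC (a : ℝ) := isHomogeneous_C (Fin (m + 1)) a
  have hX (i : Fin (m + 1)) := isHomogeneous_X ℝ i
  refine ⟨∑ i, ∑ j, C (A i j) * X i.succ * X j.succ + C k₀ * X 0 ^ 2
      + (∑ i, C (r i) * X i.succ) * X 0, C k₁ * X 0 + ∑ i, C (s i) * X i.succ, ?_, ?_, ?_⟩
  · refine ((IsHomogeneous.sum _ _ _ fun i _ => IsHomogeneous.sum _ _ _ fun j _ =>
      ((hC _).mul (hX _)).mul (hX _)).add ((hC _).mul ((hX 0).pow 2))).add ?_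
    exact (IsHomogeneous.sum _ _ _ fun i _ => (hC _).mul (hX _)).mul (hX 0)
  · exact ((hC _).mul (hX 0)).add (IsHomogeneous.sum _ _ _ fun i _ => (hC _).mul (hX _))
  · rw [fcmc]
    ring

theorem stmt_10_general (m : ℕ) (A : Matrix (Fin m) (Fin m) ℝ)
    (r s : Fin m → ℝ) (k₀ k₁ : ℝ) (H : ℝ) :
    ∃ L : Fin 5 → MvPolynomial (Fin (m + 1)) ℝ,
      (∀ i : Fin 5, (L i).IsHomogeneous (i : ℕ)) ∧
      (C (H ^ 2) * (gradSq (fcmc m A r s k₀ k₁)) ^ 3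
          - C (6 ^ 4 * A.trace ^ 2) * X 0 ^ 8
          - (L 0 * X 0 ^ 12 + L 1 * X 0 ^ 10 + L 2 * X 0 ^ 8
              + L 3 * X 0 ^ 6 + L 4 * X 0 ^ 4)).totalDegree ≤ 7 ∧
      L 0 = C (3 ^ 6 * H ^ 2) := by
  obtain ⟨F₂, F₁, h₂, h₁, hf⟩ := exists_fcmc_eq_X_zero_pow_three_add m A r s k₀ k₁
  obtain ⟨q, c, d, e, hq, hc, hd, he, hg⟩ := exists_gradSq_X_zero_pow_three_add_eq h₂ h₁
  obtain ⟨ℓ, hℓ, hℓ₀, hdeg⟩ :=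
    exists_homogeneous_expansion_pow_three (isHomogeneous_X ℝ 0) hq hc hd he
  have hC (a : ℝ) := isHomogeneous_C (Fin (m + 1)) a
  refine ⟨![C (3 ^ 6 * H ^ 2), C (H ^ 2) * ℓ 1, C (H ^ 2) * ℓ 2, C (H ^ 2) * ℓ 3,
    C (H ^ 2) * ℓ 4 - C (6 ^ 4 * A.trace ^ 2) * X 0 ^ 4], ?_, ?_, rfl⟩
  · intro i
    fin_cases i
    · exact hC _
    · exact (hC _).mul (hℓ 1)
    · exact (hC _).mul (hℓ 2)
    · exact (hC _).mul (hℓ 3)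
    · exact ((hC _).mul (hℓ 4)).sub ((hC _).mul ((isHomogeneous_X ℝ 0).pow 4))
  · rw [hf, hg]
    have hscaled := (totalDegree_mul (C (H ^ 2)) _).trans (add_le_add (totalDegree_C _).le hdeg)
    rw [zero_add] at hscaled
    refine (congrArg totalDegree ?_).trans_le hscaled
    simp only [Fin.isValue, Matrix.cons_val, hℓ₀, map_mul]
    ring

theorem stmt_10 (m : ℕ) (A : Matrix (Fin m) (Fin m) ℝ) (hA : A.IsSymm)
    (r s : Fin m → ℝ) (k₀ k₁ : ℝ) (H : ℝ) (hH : H ≠ 0) :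
    ∃ L : Fin 5 → MvPolynomial (Fin (m + 1)) ℝ,
      (∀ i : Fin 5, (L i).IsHomogeneous (i : ℕ)) ∧
      (C (H ^ 2) * (gradSq (fcmc m A r s k₀ k₁)) ^ 3
          - C (6 ^ 4 * A.trace ^ 2) * X 0 ^ 8
          - (L 0 * X 0 ^ 12 + L 1 * X 0 ^ 10 + L 2 * X 0 ^ 8
              + L 3 * X 0 ^ 6 + L 4 * X 0 ^ 4)).totalDegree ≤ 7 ∧
      L 0 = C (3 ^ 6 * H ^ 2) :=
  stmt_10_general m A r s k₀ k₁ H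
end

section
/- Suppose homogeneous polynomials p₅,…,p₉ (deg pᵢ = i), f₁, f₂ (deg fᵢ = i), and homogeneous L₀,…,L₄ (deg Lᵢ = i) with L₀ a nonzero constant satisfy: p₉x³ = L₀x¹², p₈x³ + p₉f₂ = L₁x¹⁰, p₇x³ + p₈f₂ + p₉f₁ = L₂x⁸, p₆x³ + p₇f₂ + p₈f₁ = L₃x⁶, and p₅x³ + p₆f₂ + p₇f₁ = L₄x⁴. Then f₂ vanishes at x = 0 as a polynomial in y, i.e., the restriction f₂(0,y) = 0 for all y. -/
open MvPolynomial

/-!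
Cancelling `x³` successively from the first four equations solves for `p₉, p₈, p₇, p₆`:
`p₉ = c x⁹`, `p₈ = S₂ x⁶`, `p₇ = S₄ x³` and `p₆ = L₃ x³ - S₄ f₂ - S₂ x³ f₁`, where
`S₂ = L₁ x - c f₂` and `S₄ = L₂ x² - S₂ f₂ - c x³ f₁`. Modulo `x` this gives `p₇ ≡ 0` and
`p₆ ≡ -c f₂³`, so the last equation reduces to `c f₂⁴ ≡ 0`. Evaluating at a point with `x = 0`
and using `c ≠ 0` forces `f₂ = 0` there.
-/

section Cascade

variable {R : Type*} [CommRing R] {x c p₅ p₆ p₇ p₈ p₉ f₁ f₂ L₁ L₂ L₃ L₄ : R}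

theorem dvd_mul_pow_four_of_cascade (hx : IsRegular x)
    (e1 : p₉ * x ^ 3 = c * x ^ 12)
    (e2 : p₈ * x ^ 3 + p₉ * f₂ = L₁ * x ^ 10)
    (e3 : p₇ * x ^ 3 + p₈ * f₂ + p₉ * f₁ = L₂ * x ^ 8)
    (e4 : p₆ * x ^ 3 + p₇ * f₂ + p₈ * f₁ = L₃ * x ^ 6)
    (e5 : p₅ * x ^ 3 + p₆ * f₂ + p₇ * f₁ = L₄ * x ^ 4) :
    x ∣ c * f₂ ^ 4 := by
  have cancel : ∀ a b : R, a * x ^ 3 = b * x ^ 3 → a = b := fun _ _ h => (hx.pow 3).right h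
  set S₂ := L₁ * x - c * f₂
  set S₄ := L₂ * x ^ 2 - S₂ * f₂ - c * x ^ 3 * f₁
  have h9 : p₉ = c * x ^ 9 := cancel _ _ (by linear_combination e1)
  have h8 : p₈ = S₂ * x ^ 6 := cancel _ _ (by linear_combination e2 - f₂ * h9)
  have h7 : p₇ = S₄ * x ^ 3 :=
    cancel _ _ (by linear_combination e3 - f₂ * h8 - f₁ * h9)
  have h6 : p₆ = L₃ * x ^ 3 - S₄ * f₂ - S₂ * x ^ 3 * f₁ :=
    cancel _ _ (by linear_combination e4 - f₂ * h7 - f₁ * h8)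
  rw [← Ideal.Quotient.eq_zero_iff_dvd]
  set π := Ideal.Quotient.mk (Ideal.span {x})
  have hπx : π x = 0 := (Ideal.Quotient.eq_zero_iff_dvd x x).mpr dvd_rfl
  have hπ5 := congrArg π e5
  simp only [h6, h7, S₄, S₂, map_add, map_sub, map_mul, map_pow, hπx] at hπ5 ⊢
  linear_combination -hπ5

end Cascade

theorem stmt_11_general (m : ℕ)
    (p₅ p₆ p₇ p₈ p₉ f₁ f₂ : MvPolynomial (Fin (m + 1)) ℝ)
    (L : Fin 5 → MvPolynomial (Fin (m + 1)) ℝ)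
    (c : ℝ) (hc : c ≠ 0) (hL0 : L 0 = C c)
    (e1 : p₉ * X 0 ^ 3 = L 0 * X 0 ^ 12)
    (e2 : p₈ * X 0 ^ 3 + p₉ * f₂ = L 1 * X 0 ^ 10)
    (e3 : p₇ * X 0 ^ 3 + p₈ * f₂ + p₉ * f₁ = L 2 * X 0 ^ 8)
    (e4 : p₆ * X 0 ^ 3 + p₇ * f₂ + p₈ * f₁ = L 3 * X 0 ^ 6)
    (e5 : p₅ * X 0 ^ 3 + p₆ * f₂ + p₇ * f₁ = L 4 * X 0 ^ 4) :
    ∀ v : Fin (m + 1) → ℝ, v 0 = 0 → eval v f₂ = 0 := by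
  intro v hv
  obtain ⟨q, hq⟩ := dvd_mul_pow_four_of_cascade (.of_ne_zero (X_ne_zero 0))
    (by rw [e1, hL0]) e2 e3 e4 e5
  simpa [hc, hv] using congrArg (eval v) hq

theorem stmt_11 (m : ℕ)
    (p₅ p₆ p₇ p₈ p₉ f₁ f₂ : MvPolynomial (Fin (m + 1)) ℝ)
    (L : Fin 5 → MvPolynomial (Fin (m + 1)) ℝ)
    (hp5 : p₅.IsHomogeneous 5) (hp6 : p₆.IsHomogeneous 6) (hp7 : p₇.IsHomogeneous 7)
    (hp8 : p₈.IsHomogeneous 8) (hp9 : p₉.IsHomogeneous 9)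
    (hf1 : f₁.IsHomogeneous 1) (hf2 : f₂.IsHomogeneous 2)
    (hL : ∀ i : Fin 5, (L i).IsHomogeneous (i : ℕ))
    (c : ℝ) (hc : c ≠ 0) (hL0 : L 0 = C c)
    (e1 : p₉ * X 0 ^ 3 = L 0 * X 0 ^ 12)
    (e2 : p₈ * X 0 ^ 3 + p₉ * f₂ = L 1 * X 0 ^ 10)
    (e3 : p₇ * X 0 ^ 3 + p₈ * f₂ + p₉ * f₁ = L 2 * X 0 ^ 8)
    (e4 : p₆ * X 0 ^ 3 + p₇ * f₂ + p₈ * f₁ = L 3 * X 0 ^ 6)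
    (e5 : p₅ * X 0 ^ 3 + p₆ * f₂ + p₇ * f₁ = L 4 * X 0 ^ 4) :
    ∀ v : Fin (m + 1) → ℝ, v 0 = 0 → eval v f₂ = 0 :=
  stmt_11_general m p₅ p₆ p₇ p₈ p₉ f₁ f₂ L c hc hL0 e1 e2 e3 e4 e5
end

section
/- If g ∈ ℝ[x₁,…,xₙ] is a polynomial of degree 3 whose gradient vanishes at every real zero of g, then g is not irreducible over ℝ. -/
/-!
Let `h` be the cubic part of `g`. Restricted to a line `z + t v` through a zero `z`, `g` becomes
`c₂ t² + c₃ t³` (the gradient vanishes at `z`), with `c₃ = h v`. If `c₂ ≠ 0 ≠ c₃`, the second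
root `-c₂ / c₃` is a simple zero of `g`, which is excluded; so `c₂`, a polynomial in `v`, vanishes
wherever `h` does not, hence everywhere, and `g (z + v) = h v` at every zero `z`. Lines in a
direction `u` with `h u ≠ 0` meet the zero set, so there are zeros; comparing the expansions at
two zeros shows that `h` is invariant under translation by its own zeros, and these form a
hyperplane complementary to `u`. Hence `h = h u • ℓ³` for a linear form `ℓ`, and `g` is a
constant times the cube of the affine polynomial `ℓ (x - y)`, where `y` is a zero.
-/

open MvPolynomial

namespace Polynomial

theorem exists_isRoot_of_odd_natDegree {p : Polynomial ℝ} (hp : Odd p.natDegree) :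
    ∃ x, p.IsRoot x := by
  wlog hlc : 0 ≤ p.leadingCoeff generalizing p
  · obtain ⟨x, hx⟩ := this (p := -p) (by rwa [natDegree_neg]) (by rw [leadingCoeff_neg]; linarith)
    exact ⟨x, by simpa using hx⟩
  have hdeg : 0 < p.degree := natDegree_pos_iff_degree_pos.mp hp.pos
  set q := p.comp (-X)
  have hq : q.natDegree = p.natDegree := by simp [q, natDegree_comp]
  have hqlc : q.leadingCoeff = -p.leadingCoeff := by
    rw [leadingCoeff_comp (by simp)]
    simp [hp.neg_one_pow]
  obtain ⟨a, ha⟩ := ((p.tendsto_atTop_of_leadingCoeff_nonneg hdeg hlc).eventually_ge_atTop 0).exists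
  obtain ⟨b, hb⟩ := ((q.tendsto_atBot_of_leadingCoeff_nonpos
    (natDegree_pos_iff_degree_pos.mp (hq ▸ hp.pos)) (by linarith)).eventually_le_atBot 0).exists
  exact intermediate_value_univ (-b) a p.continuous ⟨by simpa [q] using hb, ha⟩

theorem coeff_two_eq_zero_of_isRoot_derivative {K : Type*} [Field K] {p : K[X]}
    (hdeg : p.natDegree ≤ 3) (h0 : p.coeff 0 = 0) (h1 : p.coeff 1 = 0) (h3 : p.coeff 3 ≠ 0)
    (hsing : ∀ t, p.IsRoot t → p.derivative.IsRoot t) : p.coeff 2 = 0 := by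
  set a := p.coeff 2
  set b := p.coeff 3
  have hp : p = C a * X ^ 2 + C b * X ^ 3 := by
    ext (_ | _ | _ | _ | k) <;> simp [a, b, h0, h1]
    exact coeff_eq_zero_of_natDegree_lt (by omega)
  -- `t = -a / b` is a root of `p = X ^ 2 * (a + b X)`, and `p'(t) = -a t`.
  set t := -a / b
  have ht : a + b * t = 0 := by simp [t, mul_div_cancel₀ _ h3]
  have hroot : p.IsRoot t := by
    rw [IsRoot, hp]
    linear_combination (by simp; ring : eval t (C a * X ^ 2 + C b * X ^ 3) = t ^ 2 * (a + b * t)) +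
      t ^ 2 * ht
  have hder := hsing t hroot
  rw [IsRoot, hp] at hder
  have : t * a = 0 := by
    linear_combination (by simp; ring :
      eval t (derivative (C a * X ^ 2 + C b * X ^ 3)) = t * (2 * a + 3 * b * t)) - hder +
      3 * t * ht
  rcases mul_eq_zero.mp this with h | h
  · simpa [t, h3] using h
  · exact h

end Polynomial

theorem LinearMap.exists_eq_pow_mul_of_forall_add_eq {K V : Type*} [Field K] [AddCommGroup V]
    [Module K V] {H : V → K} {u : V} {n : ℕ} (hu : H u ≠ 0)
    (hsmul : ∀ (t : K) v, H (t • v) = t ^ n * H v) (hadd : ∀ w v, H w = 0 → H (w + v) = H v)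
    (hline : ∀ x, ∃ a : K, H (x - a • u) = 0) : ∃ ℓ : V →ₗ[K] K, ∀ x, H x = ℓ x ^ n * H u := by
  have huniq : ∀ x (a b : K), H (x - a • u) = 0 → H (x - b • u) = 0 → a = b := by
    intro x a b ha hb
    have : (b - a) ^ n * H u = 0 := by
      rw [← hsmul, ← hadd _ _ hb, ← ha]
      congr 1
      module
    exact (sub_eq_zero.mp (eq_zero_of_pow_eq_zero (mul_eq_zero.mp this |>.resolve_right hu))).symm
  choose ℓ hℓ using hline
  refine ⟨{ toFun := ℓ, map_add' := fun x y => ?_, map_smul' := fun c x => ?_ }, fun x => ?_⟩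
  · refine huniq (x + y) _ _ (hℓ _) ?_
    rw [show x + y - (ℓ x + ℓ y) • u = (x - ℓ x • u) + (y - ℓ y • u) by module, hadd _ _ (hℓ x),
      hℓ y]
  · refine huniq (c • x) _ _ (hℓ _) ?_
    rw [RingHom.id_apply, smul_eq_mul,
      show c • x - (c * ℓ x) • u = c • (x - ℓ x • u) by module, hsmul, hℓ x, mul_zero]
  · calc H x = H ((x - ℓ x • u) + ℓ x • u) := by rw [sub_add_cancel]
      _ = ℓ x ^ n * H u := by rw [hadd _ _ (hℓ x), hsmul]

namespace MvPolynomial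

section AevalLinear

variable {σ R : Type*} [CommRing R] {f : σ → Polynomial R}

theorem natDegree_aeval_monomial_le (hf : ∀ i, (f i).natDegree ≤ 1) (m : σ →₀ ℕ) (c : R) :
    (aeval f (monomial m c)).natDegree ≤ m.degree := by
  induction m using Finsupp.induction_linear generalizing c with
  | zero => simp
  | add m m' hm hm' =>
    rw [← mul_one c, ← monomial_mul, map_mul, map_add]
    exact Polynomial.natDegree_mul_le.trans (add_le_add (hm c) (hm' 1))
  | single i k =>
    rw [aeval_monomial, Finsupp.prod_single_index (by simp), Finsupp.degree_single]
    exact (Polynomial.natDegree_C_mul_le _ _).trans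
      (Polynomial.natDegree_pow_le_of_le k (hf i) |>.trans_eq (mul_one k))

theorem coeff_aeval_monomial_degree (hf : ∀ i, (f i).natDegree ≤ 1) (m : σ →₀ ℕ) (c : R) :
    (aeval f (monomial m c)).coeff m.degree = eval (fun i => (f i).coeff 1) (monomial m c) := by
  induction m using Finsupp.induction_linear generalizing c with
  | zero => simp
  | add m m' hm hm' =>
    rw [← mul_one c, ← monomial_mul, map_mul, map_mul, map_add,
      Polynomial.coeff_mul_add_eq_of_natDegree_le (natDegree_aeval_monomial_le hf m c)
        (natDegree_aeval_monomial_le hf m' 1), hm, hm']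
  | single i k =>
    rw [aeval_monomial, eval_monomial, Finsupp.prod_single_index (by simp),
      Finsupp.prod_single_index (by simp), Finsupp.degree_single, Polynomial.algebraMap_eq,
      Polynomial.coeff_C_mul, ← Polynomial.coeff_pow_of_natDegree_le (hf i), mul_one]

theorem natDegree_aeval_le_totalDegree (hf : ∀ i, (f i).natDegree ≤ 1) (φ : MvPolynomial σ R) :
    (aeval f φ).natDegree ≤ φ.totalDegree := by
  conv_lhs => rw [φ.as_sum]
  rw [map_sum]
  exact Polynomial.natDegree_sum_le_of_forall_le _ _ fun m hm =>
    (natDegree_aeval_monomial_le hf m _).trans (le_totalDegree hm)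

theorem coeff_aeval_of_totalDegree_le (hf : ∀ i, (f i).natDegree ≤ 1) {φ : MvPolynomial σ R}
    {N : ℕ} (hφ : φ.totalDegree ≤ N) :
    (aeval f φ).coeff N = eval (fun i => (f i).coeff 1) (homogeneousComponent N φ) := by
  classical
  conv_lhs => rw [φ.as_sum]
  rw [map_sum, Polynomial.finsetSum_coeff, homogeneousComponent_apply, map_sum,
    Finset.sum_filter]
  refine Finset.sum_congr rfl fun m hm => ?_
  split_ifs with hmN
  · rw [← hmN, coeff_aeval_monomial_degree hf]
  · exact Polynomial.coeff_eq_zero_of_natDegree_lt ((natDegree_aeval_monomial_le hf m _).trans_lt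
      (((le_totalDegree hm).trans hφ).lt_of_ne hmN))

theorem derivative_aeval [Fintype σ] (f : σ → Polynomial R) (φ : MvPolynomial σ R) :
    Polynomial.derivative (aeval f φ) =
      ∑ i, Polynomial.derivative (f i) * aeval f (pderiv i φ) := by
  classical
  induction φ using MvPolynomial.induction_on with
  | C a => simp
  | add p q hp hq => simp [hp, hq, mul_add, Finset.sum_add_distrib]
  | mul_X p j hp =>
    simp only [map_mul, aeval_X, Polynomial.derivative_mul, hp, Derivation.leibniz, pderiv_X,
      smul_eq_mul, map_add, mul_add, Finset.sum_add_distrib, Finset.sum_mul, Pi.single_apply,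
      apply_ite (aeval f), map_zero, mul_ite, mul_zero, Finset.sum_ite_eq, Finset.mem_univ,
      if_true, mul_one]
    rw [add_comm]
    congr 1
    · ring
    · exact Finset.sum_congr rfl fun i _ => by ring

end AevalLinear

section LineRestriction

variable {σ R : Type*} [CommRing R]

noncomputable def lineRestriction (g : MvPolynomial σ R) (x v : σ → R) : Polynomial R :=
  aeval (fun i => Polynomial.C (v i) * Polynomial.X + Polynomial.C (x i)) g

theorem eval_lineRestriction (g : MvPolynomial σ R) (x v : σ → R) (t : R) :
    (lineRestriction g x v).eval t = eval (x + t • v) g := by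
  rw [lineRestriction, ← Polynomial.coe_aeval_eq_eval, comp_aeval_apply]
  show aeval _ g = aeval (x + t • v) g
  congr 2
  funext i
  simp only [map_add, map_mul, Polynomial.aeval_C, Polynomial.aeval_X, Pi.add_apply,
    Pi.smul_apply, smul_eq_mul, Algebra.algebraMap_self, RingHom.id_apply]
  ring

theorem natDegree_lineRestriction_le (g : MvPolynomial σ R) (x v : σ → R) :
    (lineRestriction g x v).natDegree ≤ g.totalDegree :=
  natDegree_aeval_le_totalDegree (fun _ => Polynomial.natDegree_linear_le) g

theorem coeff_lineRestriction_of_totalDegree_le {g : MvPolynomial σ R} {N : ℕ}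
    (hg : g.totalDegree ≤ N) (x v : σ → R) :
    (lineRestriction g x v).coeff N = eval v (homogeneousComponent N g) := by
  rw [lineRestriction, coeff_aeval_of_totalDegree_le (fun _ => Polynomial.natDegree_linear_le) hg]
  simp

theorem exists_eval_eq_coeff_lineRestriction (g : MvPolynomial σ R) (x : σ → R) (k : ℕ) :
    ∃ Q : MvPolynomial σ R, ∀ v, eval v Q = (lineRestriction g x v).coeff k := by
  refine ⟨(aeval (fun i => Polynomial.C (X i) * Polynomial.X + Polynomial.C (C (x i))) g).coeff k,
    fun v => ?_⟩
  rw [← coe_aeval_eq_eval, ← Polynomial.coeff_map, ← Polynomial.coe_mapAlgHom,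
    ← AlgHom.comp_apply, comp_aeval, lineRestriction]
  simp

theorem eval_derivative_lineRestriction [Fintype σ] (g : MvPolynomial σ R) (x v : σ → R) (t : R) :
    (Polynomial.derivative (lineRestriction g x v)).eval t =
      ∑ i, v i * eval (x + t • v) (pderiv i g) := by
  simp [lineRestriction, derivative_aeval, Polynomial.eval_finsetSum, ← eval_lineRestriction]

end LineRestriction

theorem eq_zero_of_eval_eq_zero_of_eval_ne_zero {σ R : Type*} [CommRing R] [IsDomain R]
    [Infinite R] {P Q : MvPolynomial σ R} (hP : P ≠ 0) (h : ∀ v, eval v P ≠ 0 → eval v Q = 0) :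
    Q = 0 := by
  have hQP : Q * P = 0 := funext fun v => by
    by_cases hv : eval v P = 0 <;> simp [hv, h]
  exact (mul_eq_zero.mp hQP).resolve_right hP

theorem homogeneousComponent_totalDegree_ne_zero_s15 {σ R : Type*} [CommSemiring R]
    {φ : MvPolynomial σ R} (hφ : φ ≠ 0) : homogeneousComponent φ.totalDegree φ ≠ 0 := by
  obtain ⟨m, hm, hmφ⟩ := Finset.exists_mem_eq_sup φ.support (support_nonempty.mpr hφ)
    fun m : σ →₀ ℕ => m.sum fun _ e => e
  refine ne_of_apply_ne (coeff m) ?_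
  rw [coeff_homogeneousComponent, if_pos (show m.degree = φ.totalDegree from hmφ.symm), coeff_zero]
  exact mem_support_iff.mp hm

theorem exists_eval_add_smul_eq_zero {σ : Type*} {g : MvPolynomial σ ℝ} {N : ℕ} (hN : Odd N)
    (hg : g.totalDegree ≤ N) (x : σ → ℝ) {v : σ → ℝ}
    (hv : eval v (homogeneousComponent N g) ≠ 0) : ∃ t : ℝ, eval (x + t • v) g = 0 := by
  have hnat : (lineRestriction g x v).natDegree = N :=
    ((natDegree_lineRestriction_le g x v).trans hg).antisymm
      (Polynomial.le_natDegree_of_ne_zero (by rwa [coeff_lineRestriction_of_totalDegree_le hg]))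
  obtain ⟨t, ht⟩ := Polynomial.exists_isRoot_of_odd_natDegree (hnat ▸ hN)
  exact ⟨t, by rwa [← eval_lineRestriction]⟩

theorem eval_add_smul_of_eval_eq_zero {σ : Type*} [Fintype σ] {g : MvPolynomial σ ℝ}
    (hg : g.totalDegree ≤ 3) (hg₃ : homogeneousComponent 3 g ≠ 0)
    (hgrad : ∀ x, eval x g = 0 → ∀ i, eval x (pderiv i g) = 0) {z : σ → ℝ} (hz : eval z g = 0)
    (v : σ → ℝ) (t : ℝ) : eval (z + t • v) g = t ^ 3 * eval v (homogeneousComponent 3 g) := by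
  have hsing : ∀ w s, (lineRestriction g z w).IsRoot s →
      (Polynomial.derivative (lineRestriction g z w)).IsRoot s := by
    intro w s hs
    rw [Polynomial.IsRoot, eval_lineRestriction] at hs
    simp [Polynomial.IsRoot, eval_derivative_lineRestriction, hgrad _ hs]
  have h0 : ∀ w, (lineRestriction g z w).coeff 0 = 0 := fun w => by
    simpa [Polynomial.coeff_zero_eq_eval_zero, eval_lineRestriction] using hz
  have h1 : ∀ w, (lineRestriction g z w).coeff 1 = 0 := fun w => by
    have := hsing w 0 (by rw [Polynomial.IsRoot, ← Polynomial.coeff_zero_eq_eval_zero, h0])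
    simpa [Polynomial.IsRoot, ← Polynomial.coeff_zero_eq_eval_zero, Polynomial.coeff_derivative]
      using this
  have h2 : ∀ w, (lineRestriction g z w).coeff 2 = 0 := by
    obtain ⟨Q, hQ⟩ := exists_eval_eq_coeff_lineRestriction g z 2
    have hQ0 : Q = 0 := eq_zero_of_eval_eq_zero_of_eval_ne_zero hg₃ fun w hw => by
      rw [hQ]
      exact Polynomial.coeff_two_eq_zero_of_isRoot_derivative
        ((natDegree_lineRestriction_le g z w).trans hg) (h0 w) (h1 w)
        (by rwa [coeff_lineRestriction_of_totalDegree_le hg]) (hsing w)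
    simp [← hQ, hQ0]
  rw [← eval_lineRestriction, Polynomial.eval_eq_sum_range' (n := 4)
    (by linarith [(natDegree_lineRestriction_le g z v).trans hg])]
  simp [Finset.sum_range_succ, h0, h1, h2, coeff_lineRestriction_of_totalDegree_le hg]
  ring

theorem exists_eval_eq_linearMap_sub {σ K : Type*} [Fintype σ] [CommRing K]
    (ℓ : (σ → K) →ₗ[K] K) (y : σ → K) : ∃ L : MvPolynomial σ K, ∀ x, eval x L = ℓ (x - y) := by
  classical
  exact ⟨∑ i, C (ℓ fun j => if i = j then 1 else 0) * X i - C (ℓ y), fun x => by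
    simp [ℓ.pi_apply_eq_sum_univ x, mul_comm]⟩

theorem exists_eq_C_mul_pow_three {σ : Type*} [Fintype σ] {g : MvPolynomial σ ℝ}
    (hdeg : g.totalDegree = 3) (hgrad : ∀ x, eval x g = 0 → ∀ i, eval x (pderiv i g) = 0) :
    ∃ (c : ℝ) (L : MvPolynomial σ ℝ), c ≠ 0 ∧ g = C c * L ^ 3 := by
  set H := homogeneousComponent 3 g
  have hH : H ≠ 0 := by
    simpa [H, hdeg] using homogeneousComponent_totalDegree_ne_zero_s15 (φ := g)
      (by rintro rfl; simp at hdeg)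
  obtain ⟨u, hu⟩ : ∃ u, eval u H ≠ 0 := by
    by_contra! hu
    exact hH (funext fun u => by simp [hu])
  have hline := fun x => exists_eval_add_smul_eq_zero (odd_two_mul_add_one 1) hdeg.le x hu
  have hcone := fun z (hz : eval z g = 0) => eval_add_smul_of_eval_eq_zero hdeg.le hH hgrad hz
  obtain ⟨y, hy⟩ : ∃ y, eval y g = 0 := let ⟨t, ht⟩ := hline 0; ⟨_, ht⟩
  have hgy : ∀ v, eval (y + v) g = eval v H := fun v => by simpa using hcone y hy v 1
  obtain ⟨ℓ, hℓ⟩ := LinearMap.exists_eq_pow_mul_of_forall_add_eq (H := fun v => eval v H) hu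
    (fun t v => by rw [← hgy, hcone y hy])
    (fun w v hw => by simpa [add_assoc, hgy] using hcone (y + w) (by rwa [hgy]) v 1)
    (fun x => let ⟨t, ht⟩ := hline (y + x); ⟨-t, by simpa [← hgy, add_assoc] using ht⟩)
  obtain ⟨L, hL⟩ := exists_eval_eq_linearMap_sub ℓ y
  refine ⟨eval u H, L, hu, funext fun x => ?_⟩
  rw [map_mul, map_pow, eval_C, hL, mul_comm, ← hℓ, ← hgy, add_sub_cancel]

end MvPolynomial

theorem stmt_15 (n : ℕ) (g : MvPolynomial (Fin n) ℝ)
    (hdeg : g.totalDegree = 3)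
    (hgrad : ∀ x : Fin n → ℝ, eval x g = 0 → ∀ i, eval x (pderiv i g) = 0) :
    ¬ Irreducible g := by
  obtain ⟨c, L, hc, rfl⟩ := exists_eq_C_mul_pow_three hdeg hgrad
  rw [irreducible_isUnit_mul (hc.isUnit.map C)]
  exact not_irreducible_pow (by norm_num)
end

section
/- Let v be a real polynomial of degree 1 and w a real polynomial such that w·v² has degree 3 and the gradient of g = w·v² vanishes at every real zero of g. Then w is a constant multiple of v. Consequently g = c·v³. -/
/-!
Since `deg v = 1` and `deg (w v²) = 3`, `w` is affine and non-constant, so some `∂ᵢ w` is a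
nonzero constant `c`. At a real zero of `w`, `∂ᵢ (w v²) = c v²`, so the hypothesis forces `v = 0`
there: the zero hyperplane of `w` lies in that of `v`. Moving any point `x` along the `i`-th axis
onto the hyperplane `w = 0` shows `v(x) = μ w(x)` with `μ = ∂ᵢ v / ∂ᵢ w`, hence `v = μ w`.
-/

open MvPolynomial

theorem Finsupp.eq_zero_or_eq_single_of_degree_le_one {σ : Type*} {d : σ →₀ ℕ}
    (hd : d.degree ≤ 1) : d = 0 ∨ ∃ i, d = Finsupp.single i 1 := by
  rcases Nat.le_one_iff_eq_zero_or_eq_one.mp hd with h | h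
  · exact Or.inl ((degree_eq_zero_iff d).mp h)
  · obtain ⟨i, hi⟩ := Multiset.card_eq_one.mp ((card_toMultiset d).trans h)
    refine Or.inr ⟨i, ?_⟩
    classical
    rw [← toMultiset_toFinsupp d, hi, ← one_nsmul ({i} : Multiset σ), ← toMultiset_single,
      toMultiset_toFinsupp]

namespace MvPolynomial

variable {R σ : Type*} [CommSemiring R]

theorem eq_C_add_sum_C_mul_X_of_totalDegree_le_one [Fintype σ] {p : MvPolynomial σ R}
    (hp : p.totalDegree ≤ 1) :
    p = C (coeff 0 p) + ∑ i, C (coeff (Finsupp.single i 1) p) * X i := by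
  classical
  ext d
  simp only [coeff_add, coeff_C, coeff_sum, coeff_C_mul, coeff_X]
  by_cases hd : d.degree ≤ 1
  · rcases Finsupp.eq_zero_or_eq_single_of_degree_le_one hd with rfl | ⟨i, rfl⟩
    · simp
    · simp [Finsupp.single_left_inj, eq_comm (a := (0 : σ →₀ ℕ))]
  · have hne : ∀ i, Finsupp.single i 1 ≠ d := fun i h => hd (by simp [← h])
    rw [coeff_eq_zero_of_totalDegree_lt (by rw [← Finsupp.degree_apply]; omega),
      if_neg (by rintro rfl; simp at hd)]
    simp [hne]

variable [Fintype σ]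

theorem pderiv_eq_C_coeff_of_totalDegree_le_one {p : MvPolynomial σ R} (hp : p.totalDegree ≤ 1)
    (i : σ) : pderiv i p = C (coeff (Finsupp.single i 1) p) := by
  classical
  conv_lhs => rw [eq_C_add_sum_C_mul_X_of_totalDegree_le_one hp]
  simp [pderiv_X, Pi.single_apply]

theorem eval_add_single_of_totalDegree_le_one [DecidableEq σ] {p : MvPolynomial σ R}
    (hp : p.totalDegree ≤ 1) (x : σ → R) (i : σ) (t : R) :
    eval (x + Pi.single i t) p = eval x p + t * coeff (Finsupp.single i 1) p := by
  have hp' := eq_C_add_sum_C_mul_X_of_totalDegree_le_one hp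
  conv_lhs => rw [hp']
  conv_rhs => arg 1; rw [hp']
  simp only [map_add, eval_C, map_sum, map_mul, eval_X, Pi.add_apply, Pi.single_apply, mul_add,
    mul_ite, mul_zero, Finset.sum_add_distrib, Finset.sum_ite_eq', Finset.mem_univ, ↓reduceIte]
  ring

theorem exists_coeff_single_ne_zero_of_totalDegree_eq_one {p : MvPolynomial σ R}
    (hp : p.totalDegree = 1) : ∃ i, coeff (Finsupp.single i 1) p ≠ 0 := by
  by_contra! h
  have hC := eq_C_add_sum_C_mul_X_of_totalDegree_le_one hp.le
  simp only [h, map_zero, zero_mul, Finset.sum_const_zero, add_zero] at hC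
  rw [hC, totalDegree_C] at hp
  exact zero_ne_one hp

theorem exists_eq_C_mul_of_eval_eq_zero_imp {K : Type*} [Field K] [Infinite K]
    {v w : MvPolynomial σ K} (hv : v.totalDegree ≤ 1) (hw : w.totalDegree ≤ 1) {i : σ}
    (hwi : coeff (Finsupp.single i 1) w ≠ 0) (hvw : ∀ x, eval x w = 0 → eval x v = 0) :
    ∃ μ, v = C μ * w := by
  classical
  set c := coeff (Finsupp.single i 1) w
  refine ⟨coeff (Finsupp.single i 1) v / c, funext fun x => ?_⟩
  have hx' := hvw (x + Pi.single i (-eval x w / c)) (by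
    rw [eval_add_single_of_totalDegree_le_one hw]
    field_simp
    ring)
  rw [eval_add_single_of_totalDegree_le_one hv] at hx'
  rw [eval_mul, eval_C]
  field_simp at hx' ⊢
  linear_combination hx'

end MvPolynomial

theorem stmt_16 (n : ℕ) (v w : MvPolynomial (Fin n) ℝ)
    (hv : v.totalDegree = 1) (hdeg : (w * v ^ 2).totalDegree = 3)
    (hgrad : ∀ x : Fin n → ℝ, eval x (w * v ^ 2) = 0 →
      ∀ i, eval x (pderiv i (w * v ^ 2)) = 0) :
    ∃ c : ℝ, w = C c * v ∧ w * v ^ 2 = C c * v ^ 3 := by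
  have hv0 : v ≠ 0 := by rintro rfl; simp at hv
  have hw0 : w ≠ 0 := by rintro rfl; simp at hdeg
  have hw : w.totalDegree = 1 := by
    rw [totalDegree_mul_of_isDomain hw0 (pow_ne_zero 2 hv0), sq,
      totalDegree_mul_of_isDomain hv0 hv0, hv] at hdeg
    omega
  obtain ⟨i, hi⟩ := exists_coeff_single_ne_zero_of_totalDegree_eq_one hw
  have hzero : ∀ x, eval x w = 0 → eval x v = 0 := fun x hx => by
    simpa [pderiv_mul, hx, pderiv_eq_C_coeff_of_totalDegree_le_one hw.le, hi]
      using hgrad x (by simp [hx]) i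
  obtain ⟨μ, hvμ⟩ := exists_eq_C_mul_of_eval_eq_zero_imp hv.le hw.le hi hzero
  have hμ : μ ≠ 0 := by rintro rfl; simp [hvμ] at hv0
  have hwv : w = C μ⁻¹ * v := by
    rw [hvμ, ← mul_assoc, ← map_mul, inv_mul_cancel₀ hμ, map_one, one_mul]
  exact ⟨μ⁻¹, hwv, by rw [hwv]; ring⟩
end
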